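/- arXiv:1703.09329 — 7 statements merged into one kernel-verified Lean document; each statement's English description precedes it below -/
import Mathlib

section
/- There exist constants $C_1, C_2, C_3, C_4 > 0$ such that for all $\lambda>0$, all $t>0$, all $s>0$, and each $k\in\{1,2,3,4\}$, the function $E_{\lambda,t}(s) := e^{-\lambda^s t}$ satisfies $0 < E_{\lambda,t}(s) \le 1$ and $\left|\frac{d^k}{ds^k} E_{\lambda,t}(s)\right| \le \frac{C_k}{s^k}\left(1 + |\ln t|^k\right)$. -/
/-!
Write `λ^σ t = exp (σ ln λ + ln t)`, so that `E(σ) = F(σ ln λ + ln t)` with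
`F(y) = exp(-e^y)` and `E^{(k)}(s) = (ln λ)^k F^{(k)}(y)` at `y = s ln λ + ln t`. For `k ≥ 1`,
`F^{(k)}(y) = e^y Q(e^y) exp(-e^y)` for a polynomial `Q`, which decays exponentially as `y → -∞`
and doubly exponentially as `y → +∞`; hence `(1 + |y|)^k |F^{(k)}(y)| ≤ M_k`. Since
`|s ln λ| ≤ |y| + |ln t| ≤ (1 + |y|)(1 + |ln t|)`, this gives
`s^k |E^{(k)}(s)| ≤ M_k (1 + |ln t|)^k ≤ 2^{k-1} M_k (1 + |ln t|^k)`.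
-/

open Real Filter Topology Polynomial

/-- `expNegExpPoly k u = T_k(-u)`, where `T_k` is the `k`-th Touchard polynomial. -/
noncomputable def expNegExpPoly : ℕ → ℝ[X]
  | 0 => 1
  | k + 1 => X * (derivative (expNegExpPoly k) - expNegExpPoly k)

theorem hasDerivAt_eval_exp_mul_exp_neg_exp (P : ℝ[X]) (y : ℝ) :
    HasDerivAt (fun y => P.eval (exp y) * exp (-exp y))
      ((X * (derivative P - P)).eval (exp y) * exp (-exp y)) y := by
  have hP : HasDerivAt (fun y => P.eval (exp y)) ((derivative P).eval (exp y) * exp y) y :=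
    (P.hasDerivAt (exp y)).comp y (hasDerivAt_exp y)
  have hE : HasDerivAt (fun y => exp (-exp y)) (exp (-exp y) * -exp y) y :=
    (hasDerivAt_exp y).neg.exp
  refine (hP.mul hE).congr_deriv ?_
  simp only [eval_mul, eval_X, eval_sub]
  ring

theorem iteratedDeriv_exp_neg_exp (k : ℕ) :
    iteratedDeriv k (fun y => exp (-exp y))
      = fun y => (expNegExpPoly k).eval (exp y) * exp (-exp y) := by
  induction k with
  | zero => funext y; simp [expNegExpPoly]
  | succ k ih =>
    rw [iteratedDeriv_succ, ih]
    funext y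
    exact (hasDerivAt_eval_exp_mul_exp_neg_exp _ y).deriv

theorem Polynomial.tendsto_eval_mul_exp_neg_atTop (R : ℝ[X]) :
    Tendsto (fun u => R.eval u * exp (-u)) atTop (𝓝 0) := by
  have hR : (fun u => R.eval u) =O[atTop] fun u => u ^ R.natDegree := by
    simpa using R.isBigO_atTop_of_degree_le (X ^ R.natDegree) (by simp [degree_le_natDegree])
  exact (hR.mul (Asymptotics.isBigO_refl _ _)).trans_tendsto
    (tendsto_pow_mul_exp_neg_atTop_nhds_zero _)

theorem tendsto_one_add_abs_pow_mul_exp_eval_exp_neg_exp_cocompact (Q : ℝ[X]) (n : ℕ) :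
    Tendsto (fun y => (1 + |y|) ^ n * (exp y * Q.eval (exp y) * exp (-exp y)))
      (cocompact ℝ) (𝓝 0) := by
  rw [cocompact_eq_atBot_atTop, tendsto_sup]
  constructor
  · have h1 : Tendsto (fun y => (1 + |y|) ^ n * exp y) atBot (𝓝 0) := by
      refine (((1 + X : ℝ[X]) ^ n).tendsto_eval_mul_exp_neg_atTop.comp
        tendsto_neg_atBot_atTop).congr' ?_
      filter_upwards [eventually_le_atBot 0] with y hy
      simp [abs_of_nonpos hy]
    have h2 : Tendsto (fun y => Q.eval (exp y) * exp (-exp y)) atBot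
        (𝓝 (Q.eval 0 * exp (-0))) :=
      ((Q.continuous.mul (continuous_exp.comp continuous_neg)).tendsto 0).comp tendsto_exp_atBot
    simpa [mul_assoc, mul_left_comm] using h1.mul h2
  · set R : ℝ[X] := X ^ (n + 1) * Q with hR
    have h : Tendsto (fun y => ‖R.eval (exp y) * exp (-exp y)‖) atTop (𝓝 0) := by
      simpa only [Function.comp_def, norm_zero] using
        (R.tendsto_eval_mul_exp_neg_atTop.comp tendsto_exp_atTop).norm
    refine squeeze_zero_norm' ?_ h
    filter_upwards [eventually_ge_atTop 0] with y hy
    have hw : 1 + |y| ≤ exp y := by rw [abs_of_nonneg hy]; linarith [add_one_le_exp y]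
    calc ‖(1 + |y|) ^ n * (exp y * Q.eval (exp y) * exp (-exp y))‖
        = (1 + |y|) ^ n * (exp y * |Q.eval (exp y)| * exp (-exp y)) := by
          simp [abs_of_nonneg (by positivity : (0:ℝ) ≤ 1 + |y|)]
      _ ≤ exp y ^ n * (exp y * |Q.eval (exp y)| * exp (-exp y)) := by gcongr
      _ = ‖R.eval (exp y) * exp (-exp y)‖ := by
          simp [hR]; ring

theorem exists_pos_bound_of_tendsto_cocompact {α E : Type*} [TopologicalSpace α]
    [SeminormedAddCommGroup E] {f : α → E} (hf : Continuous f)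
    (h : Tendsto f (cocompact α) (𝓝 0)) : ∃ M > 0, ∀ x, ‖f x‖ ≤ M := by
  obtain ⟨M, hM⟩ := isBounded_iff_forall_norm_le.1
    (ZeroAtInftyContinuousMap.isBounded_range ⟨⟨f, hf⟩, h⟩)
  exact ⟨max M 1, by positivity, fun x => (hM _ ⟨x, rfl⟩).trans (le_max_left _ _)⟩

theorem exists_one_add_abs_pow_mul_iteratedDeriv_exp_neg_exp_le (k : ℕ) :
    ∃ M > 0, ∀ y,
      (1 + |y|) ^ (k + 1) * |iteratedDeriv (k + 1) (fun y => exp (-exp y)) y| ≤ M := by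
  set Q := derivative (expNegExpPoly k) - expNegExpPoly k
  have hcont : Continuous fun y =>
      (1 + |y|) ^ (k + 1) * (exp y * Q.eval (exp y) * exp (-exp y)) := by
    fun_prop
  obtain ⟨M, hM0, hM⟩ := exists_pos_bound_of_tendsto_cocompact hcont
    (tendsto_one_add_abs_pow_mul_exp_eval_exp_neg_exp_cocompact Q (k + 1))
  refine ⟨M, hM0, fun y => ?_⟩
  have := hM y
  rw [iteratedDeriv_exp_neg_exp]
  simpa [expNegExpPoly, Q, abs_mul, mul_assoc,
    abs_of_nonneg (by positivity : (0:ℝ) ≤ 1 + |y|)] using this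

theorem iteratedDeriv_exp_neg_rpow_mul {lam t : ℝ} (hlam : 0 < lam) (ht : 0 < t) (k : ℕ) :
    iteratedDeriv k (fun σ => exp (-(lam ^ σ) * t))
      = fun s => log lam ^ k * iteratedDeriv k (fun y => exp (-exp y)) (log lam * s + log t) := by
  have hfun : (fun σ : ℝ => exp (-(lam ^ σ) * t))
      = fun σ => exp (-exp (log lam * σ + log t)) := by
    funext σ
    rw [rpow_def_of_pos hlam, exp_add, exp_log ht, neg_mul]
  have h := iteratedDeriv_comp_const_mul (n := k) (f := fun x => exp (-exp (x + log t)))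
    (by fun_prop) (log lam)
  have h' := iteratedDeriv_comp_add_const k (fun y => exp (-exp y)) (log t)
  rw [hfun, h, h']

theorem abs_iteratedDeriv_exp_neg_rpow_mul_le {k : ℕ} {M : ℝ}
    (hM : ∀ y, (1 + |y|) ^ k * |iteratedDeriv k (fun y => exp (-exp y)) y| ≤ M)
    {lam t s : ℝ} (hlam : 0 < lam) (ht : 0 < t) (hs : 0 < s) :
    |iteratedDeriv k (fun σ => exp (-(lam ^ σ) * t)) s|
      ≤ 2 ^ (k - 1) * M / s ^ k * (1 + |log t| ^ k) := by
  rw [iteratedDeriv_exp_neg_rpow_mul hlam ht]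
  set y := log lam * s + log t
  set D := |iteratedDeriv k (fun y => exp (-exp y)) y|
  have hLs : |log lam| * s ≤ (1 + |y|) * (1 + |log t|) := by
    have : |log lam * s| ≤ |y| + |log t| := by
      simpa [y] using abs_sub y (log t)
    rw [abs_mul, abs_of_pos hs] at this
    nlinarith [abs_nonneg y, abs_nonneg (log t)]
  have hlog : (1 + |log t|) ^ k ≤ 2 ^ (k - 1) * (1 + |log t| ^ k) := by
    simpa using add_pow_le zero_le_one (abs_nonneg (log t)) k
  rw [div_mul_eq_mul_div, le_div_iff₀ (by positivity), abs_mul, abs_pow]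
  calc |log lam| ^ k * D * s ^ k = (|log lam| * s) ^ k * D := by ring
    _ ≤ ((1 + |y|) * (1 + |log t|)) ^ k * D := by gcongr
    _ = (1 + |log t|) ^ k * ((1 + |y|) ^ k * D) := by rw [mul_pow]; ring
    _ ≤ (2 ^ (k - 1) * (1 + |log t| ^ k)) * M := by gcongr; exact hM y
    _ = 2 ^ (k - 1) * M * (1 + |log t| ^ k) := by ring

/-- There are constants `C_1, …, C_4 > 0` such that for all `λ, t, s > 0` the function
`E_{λ,t}(s) = e^{-λ^s t}` satisfies `0 < E ≤ 1` and
`|d^k/ds^k E_{λ,t}(s)| ≤ (C_k / s^k)(1 + |ln t|^k)` for `k = 1, …, 4`. -/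
theorem stmt10 :
    ∃ C : ℕ → ℝ, (∀ k, 1 ≤ k → k ≤ 4 → 0 < C k) ∧
      ∀ lam t s : ℝ, 0 < lam → 0 < t → 0 < s →
        (0 < Real.exp (-(lam ^ s) * t) ∧ Real.exp (-(lam ^ s) * t) ≤ 1) ∧
        ∀ k, 1 ≤ k → k ≤ 4 →
          |iteratedDeriv k (fun σ : ℝ => Real.exp (-(lam ^ σ) * t)) s|
            ≤ C k / s ^ k * (1 + |Real.log t| ^ k) := by
  choose M hM0 hM using exists_one_add_abs_pow_mul_iteratedDeriv_exp_neg_exp_le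
  refine ⟨fun k => 2 ^ (k - 1) * M (k - 1), fun k _ _ => by have := hM0 (k - 1); positivity, ?_⟩
  intro lam t s hlam ht hs
  refine ⟨⟨exp_pos _, exp_le_one_iff.2 ?_⟩, fun k hk _ => ?_⟩
  · have := rpow_pos_of_pos hlam s
    nlinarith
  · obtain ⟨m, rfl⟩ := Nat.exists_eq_add_of_le' hk
    exact abs_iteratedDeriv_exp_neg_rpow_mul_le (hM m) hlam ht hs
end

section
/- There exists a constant $C>0$ such that for all $\lambda>0$, $t>0$ and $s>0$: $\lambda^s\, t\, |\ln \lambda|\, e^{-\lambda^s t} \le \frac{C}{s}\left(1 + |\ln t|\right)$. (The left-hand side is the absolute value of $\frac{d}{ds} e^{-\lambda^s t} = -\lambda^s t \ln(\lambda)\, e^{-\lambda^s t}$.) -/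
/-- `u e^{-u} ≤ 1` for `u ≥ 0`. -/
lemma aux_mul_exp_neg_le_one {u : ℝ} (hu : 0 ≤ u) : u * Real.exp (-u) ≤ 1 := by
  have h : u ≤ Real.exp u := (Real.add_one_le_exp u).trans' (by linarith)
  have hpos : 0 < Real.exp u := Real.exp_pos u
  rw [Real.exp_neg]
  rw [← div_eq_mul_inv, div_le_one hpos]
  exact h

/-- `x e^{-x} |log x| ≤ 4` for `x > 0`. -/
lemma aux_xexp_log {x : ℝ} (hx : 0 < x) :
    x * Real.exp (-x) * |Real.log x| ≤ 4 := by
  rcases le_or_gt 1 x with h1 | h1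
  · rw [abs_of_nonneg (Real.log_nonneg h1)]
    have hlog : Real.log x ≤ x - 1 := Real.log_le_sub_one_of_pos hx
    have hhalf : x / 2 * Real.exp (-(x / 2)) ≤ 1 :=
      aux_mul_exp_neg_le_one (by linarith)
    have hsq : Real.exp (-(x / 2)) * Real.exp (-(x / 2)) = Real.exp (-x) := by
      rw [← Real.exp_add]; ring_nf
    have he : 0 < Real.exp (-(x / 2)) := Real.exp_pos _
    have hle2 : x * Real.exp (-(x / 2)) ≤ 2 := by nlinarith
    have hnn : 0 ≤ x * Real.exp (-(x / 2)) := by positivity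
    have hsq2 : x * x * Real.exp (-x) ≤ 4 := by
      calc x * x * Real.exp (-x)
          = (x * Real.exp (-(x / 2))) * (x * Real.exp (-(x / 2))) := by
            rw [← hsq]; ring
        _ ≤ 2 * 2 := mul_le_mul hle2 hle2 hnn (by norm_num)
        _ = 4 := by norm_num
    nlinarith [Real.exp_pos (-x), Real.log_nonneg h1]
  · rw [abs_of_nonpos (Real.log_nonpos hx.le h1.le)]
    have hlog : Real.log x⁻¹ ≤ x⁻¹ - 1 := Real.log_le_sub_one_of_pos (by positivity)
    rw [Real.log_inv] at hlog
    have hexp : Real.exp (-x) ≤ 1 := by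
      simpa using Real.exp_le_exp.mpr (by linarith : -x ≤ 0)
    have hxi : x * x⁻¹ = 1 := mul_inv_cancel₀ hx.ne'
    have hxe : 0 ≤ x * Real.exp (-x) := by positivity
    have hstep : x * Real.exp (-x) * -Real.log x ≤ x * Real.exp (-x) * (x⁻¹ - 1) :=
      mul_le_mul_of_nonneg_left hlog hxe
    have heq : x * Real.exp (-x) * (x⁻¹ - 1) = Real.exp (-x) * (1 - x) := by
      field_simp
    nlinarith [Real.exp_pos (-x)]

/-- Uniform bound on the first `s`-derivative of `e^{-λ^s t}`:
`λ^s t |ln λ| e^{-λ^s t} ≤ (C/s)(1 + |ln t|)`. -/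
theorem stmt11 :
    ∃ C : ℝ, 0 < C ∧
      ∀ lam t s : ℝ, 0 < lam → 0 < t → 0 < s →
        lam ^ s * t * |Real.log lam| * Real.exp (-(lam ^ s) * t)
          ≤ C / s * (1 + |Real.log t|) := by
  refine ⟨4, by norm_num, ?_⟩
  intro lam t s hlam ht hs
  set x : ℝ := lam ^ s * t with hxdef
  have hx : 0 < x := mul_pos (Real.rpow_pos_of_pos hlam s) ht
  have hdiff : Real.log x - Real.log t = s * Real.log lam := by
    rw [hxdef, Real.log_mul (by positivity) ht.ne', Real.log_rpow hlam]; ring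
  have habs : |Real.log lam| = |Real.log x - Real.log t| / s := by
    rw [hdiff, abs_mul, abs_of_pos hs, mul_div_cancel_left₀ _ hs.ne']
  have hLHS : lam ^ s * t * |Real.log lam| * Real.exp (-(lam ^ s) * t)
      = x * Real.exp (-x) * |Real.log x - Real.log t| / s := by
    rw [habs, hxdef, neg_mul]; ring
  rw [hLHS]
  rw [div_le_iff₀ hs] at *
  have h2 : x * Real.exp (-x) * |Real.log x - Real.log t| ≤ 4 * (1 + |Real.log t|) := by
    have htri : |Real.log x - Real.log t| ≤ |Real.log x| + |Real.log t| :=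
      abs_sub _ _
    have hxe : 0 ≤ x * Real.exp (-x) := by positivity
    have h3 : x * Real.exp (-x) * |Real.log x - Real.log t|
        ≤ x * Real.exp (-x) * |Real.log x| + x * Real.exp (-x) * |Real.log t| := by
      nlinarith
    have h4 := aux_xexp_log hx
    have h5 : x * Real.exp (-x) * |Real.log t| ≤ 1 * |Real.log t| :=
      mul_le_mul_of_nonneg_right (aux_mul_exp_neg_le_one hx.le) (abs_nonneg _)
    nlinarith [abs_nonneg (Real.log t)]
  calc x * Real.exp (-x) * |Real.log x - Real.log t| ≤ 4 * (1 + |Real.log t|) := h2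
    _ = 4 / s * (1 + |Real.log t|) * s := by field_simp
end

section
/- There exists a constant $C>0$ such that for all $\lambda>0$, $t>0$ and $s>0$: $t\,\lambda^s (\ln \lambda)^2\, \left|t\lambda^s - 1\right|\, e^{-\lambda^s t} \le \frac{C}{s^2}\left(1 + |\ln t|^2\right)$. (The left-hand side is the absolute value of $\frac{d^2}{ds^2} e^{-\lambda^s t} = t\lambda^s(\ln\lambda)^2 (t\lambda^s - 1) e^{-\lambda^s t}$.) -/
lemma pow4_le_exp (x : ℝ) (hx : 0 ≤ x) : x ^ 4 ≤ 256 * Real.exp x := by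
  have h1 : x / 4 ≤ Real.exp (x / 4) := by
    have := Real.add_one_le_exp (x / 4); linarith
  have h2 : Real.exp (x / 4) ^ 4 = Real.exp x := by
    rw [← Real.exp_nat_mul]; norm_num; ring_nf
  have h3 : (x / 4) ^ 4 ≤ Real.exp (x / 4) ^ 4 :=
    pow_le_pow_left₀ (by positivity) h1 4
  calc x ^ 4 = 256 * (x / 4) ^ 4 := by ring
    _ ≤ 256 * Real.exp (x / 4) ^ 4 := by linarith
    _ = 256 * Real.exp x := by rw [h2]

lemma pow4_exp_neg (x : ℝ) (hx : 0 ≤ x) : x ^ 4 * Real.exp (-x) ≤ 256 := by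
  have h := pow4_le_exp x hx
  have he := Real.exp_pos x
  rw [Real.exp_neg, ← div_eq_mul_inv, div_le_iff₀ he]
  linarith

lemma gbound (x : ℝ) (hx : 0 < x) : x * |x - 1| * Real.exp (-x) ≤ 256 := by
  have hep' := Real.exp_pos (-x)
  rcases le_total x 1 with h | h
  · rw [abs_of_nonpos (by linarith)]
    have he1 : Real.exp (-x) ≤ 1 := Real.exp_le_one_iff.mpr (by linarith)
    have h1 : x * -(x - 1) ≤ 1 := by nlinarith
    have h2 : 0 ≤ x * -(x - 1) := mul_nonneg hx.le (by linarith)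
    nlinarith [mul_le_mul h1 he1 hep'.le (by linarith : (0:ℝ) ≤ 1)]
  · rw [abs_of_nonneg (by linarith)]
    calc x * (x - 1) * Real.exp (-x) ≤ x ^ 4 * Real.exp (-x) := by
          apply mul_le_mul_of_nonneg_right _ hep'.le
          have h1 : 1 ≤ x ^ 2 := by nlinarith
          have h2 : x ^ 2 ≤ x ^ 4 := by nlinarith [sq_nonneg x]
          nlinarith
      _ ≤ 256 := pow4_exp_neg x hx.le

lemma hbound (x : ℝ) (hx : 0 < x) :
    x * Real.log x ^ 2 * |x - 1| * Real.exp (-x) ≤ 256 := by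
  have hep' := Real.exp_pos (-x)
  rcases le_total x 1 with h | h
  · rw [abs_of_nonpos (by linarith)]
    have hL : Real.log x ≤ 0 := Real.log_nonpos hx.le h
    set u := -Real.log x with hu
    have hu0 : 0 ≤ u := by rw [hu]; linarith
    have hxe : x = Real.exp (-u) := by rw [hu, neg_neg, Real.exp_log hx]
    have h2 : Real.exp (u / 2) ^ 2 = Real.exp u := by
      rw [← Real.exp_nat_mul]; norm_num; ring_nf
    have h1 : u ^ 2 ≤ 4 * Real.exp u := by
      have := Real.add_one_le_exp (u / 2)
      nlinarith [Real.exp_pos (u / 2)]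
    have hen : Real.exp (-u) * Real.exp u = 1 := by rw [← Real.exp_add]; simp
    have hxl : x * Real.log x ^ 2 ≤ 4 := by
      have hlx : Real.log x = -u := by rw [hu]; ring
      rw [hlx, hxe]
      nlinarith [Real.exp_pos (-u)]
    have he1 : Real.exp (-x) ≤ 1 := Real.exp_le_one_iff.mpr (by linarith)
    have hnn : 0 ≤ x * Real.log x ^ 2 := by positivity
    nlinarith [mul_nonneg hnn (by linarith : (0:ℝ) ≤ 1 - x)]
  · rw [abs_of_nonneg (by linarith)]
    have hL0 : 0 ≤ Real.log x := Real.log_nonneg h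
    have hLx : Real.log x ≤ x - 1 := Real.log_le_sub_one_of_pos hx
    have key : x * Real.log x ^ 2 * (x - 1) ≤ x ^ 4 := by
      have h1 : Real.log x ^ 2 ≤ (x - 1) ^ 2 := by nlinarith
      have h2 : (0:ℝ) ≤ x * (x - 1) := mul_nonneg hx.le (by linarith)
      nlinarith [mul_le_mul_of_nonneg_right h1 h2, sq_nonneg (x - 1)]
    calc x * Real.log x ^ 2 * (x - 1) * Real.exp (-x)
        ≤ x ^ 4 * Real.exp (-x) := mul_le_mul_of_nonneg_right key hep'.le
      _ ≤ 256 := pow4_exp_neg x hx.le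

/-- Uniform bound on the second `s`-derivative of `e^{-λ^s t}`:
`t λ^s (ln λ)² |t λ^s - 1| e^{-λ^s t} ≤ (C/s²)(1 + |ln t|²)`. -/
theorem stmt12 :
    ∃ C : ℝ, 0 < C ∧
      ∀ lam t s : ℝ, 0 < lam → 0 < t → 0 < s →
        t * lam ^ s * Real.log lam ^ 2 * |t * lam ^ s - 1| * Real.exp (-(lam ^ s) * t)
          ≤ C / s ^ 2 * (1 + |Real.log t| ^ 2) := by
  refine ⟨512, by norm_num, fun lam t s hlam ht hs => ?_⟩
  have ha0 : 0 < lam ^ s := Real.rpow_pos_of_pos hlam s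
  set a := lam ^ s with ha
  set x := t * a with hxdef
  have hx0 : 0 < x := mul_pos ht ha0
  have hlogl : Real.log lam = Real.log a / s := by
    rw [ha, Real.log_rpow hlam]; field_simp
  have hloga : Real.log a = Real.log x - Real.log t := by
    rw [hxdef, Real.log_mul ht.ne' ha0.ne']; ring
  have hs2 : (0:ℝ) < s ^ 2 := by positivity
  have hLHS : t * a * Real.log lam ^ 2 * |t * a - 1| * Real.exp (-a * t)
      = (x * Real.log a ^ 2 * |x - 1| * Real.exp (-x)) / s ^ 2 := by
    rw [hlogl]
    have hneg : -a * t = -x := by rw [hxdef]; ring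
    rw [hneg, hxdef]
    field_simp
  rw [hLHS, div_le_iff₀ hs2]
  have hsq : Real.log a ^ 2 ≤ 2 * Real.log x ^ 2 + 2 * Real.log t ^ 2 := by
    rw [hloga]; nlinarith [sq_nonneg (Real.log x + Real.log t)]
  have hg := gbound x hx0
  have hh := hbound x hx0
  have hgnn : 0 ≤ x * |x - 1| * Real.exp (-x) := by positivity
  have habs : |Real.log t| ^ 2 = Real.log t ^ 2 := sq_abs _
  have hrhs : 512 / s ^ 2 * (1 + |Real.log t| ^ 2) * s ^ 2
      = 512 * (1 + Real.log t ^ 2) := by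
    rw [habs]; field_simp
  rw [hrhs]
  nlinarith [sq_nonneg (Real.log t), mul_le_mul_of_nonneg_left hg (sq_nonneg (Real.log t))]
end

section
/- There exists a constant $C>0$ such that for all $\lambda>0$, $t>0$, $\bar s>0$, and all real $h$ with $0<|h|\le \bar s/2$: $\left| e^{-\lambda^{\bar s + h} t} - e^{-\lambda^{\bar s} t} + h\, t\, \lambda^{\bar s} \ln(\lambda)\, e^{-\lambda^{\bar s} t} \right| \le C\, \frac{h^2}{\bar s^{2}}\left(1 + |\ln t|^2\right)$. -/
/-!
Taylor's formula bounds the remainder by `h²` times the supremum of `|E''|`, where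
`E(s) = e^{-λ^s t}`, on the interval between `s̄` and `s̄ + h`, which lies in `[s̄/2, ∞)`.
With `w = λ^s t` one has `E''(s) = (ln λ)² w (w - 1) e^{-w}`, and `s ln λ = ln w - ln t` turns
the factor `(ln λ)²` into `s⁻² (1 + ln² w)(1 + ln² t)` up to a constant. The remaining function
of `w`, `(1 + ln² w) w |w - 1| e^{-w}`, is bounded on `(0, ∞)` because `ln² w ≤ 2 (w + w⁻¹)`.
-/

open Real Set

theorem Convex.norm_sub_sub_smul_deriv_le {E : Type*} [NormedAddCommGroup E] [NormedSpace ℝ E]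
    {f f' f'' : ℝ → E} {s : Set ℝ} {M x y : ℝ} (hs : Convex ℝ s)
    (hf : ∀ z ∈ s, HasDerivWithinAt f (f' z) s z)
    (hf' : ∀ z ∈ s, HasDerivWithinAt f' (f'' z) s z) (hM : ∀ z ∈ s, ‖f'' z‖ ≤ M)
    (hx : x ∈ s) (hy : y ∈ s) :
    ‖f y - f x - (y - x) • f' x‖ ≤ M * (y - x) ^ 2 := by
  have hxy : uIcc x y ⊆ s := by simpa only [segment_eq_uIcc] using hs.segment_subset hx hy
  have hM0 : 0 ≤ M := (norm_nonneg _).trans (hM x hx)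
  have hg : ∀ z ∈ uIcc x y,
      HasDerivWithinAt (fun z ↦ f z - z • f' x) (f' z - f' x) (uIcc x y) z := fun z hz ↦ by
    simpa using ((hf z (hxy hz)).mono hxy).fun_sub ((hasDerivWithinAt_id z _).smul_const (f' x))
  have hg' : ∀ z ∈ uIcc x y, ‖f' z - f' x‖ ≤ M * |y - x| := fun z hz ↦
    calc ‖f' z - f' x‖ ≤ M * ‖z - x‖ :=
          hs.norm_image_sub_le_of_norm_hasDerivWithin_le hf' hM hx (hxy hz)
      _ ≤ M * |y - x| := by
          gcongr
          exact abs_sub_left_of_mem_uIcc hz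
  have := (convex_uIcc x y).norm_image_sub_le_of_norm_hasDerivWithin_le hg hg'
    left_mem_uIcc right_mem_uIcc
  rw [Real.norm_eq_abs, mul_assoc, abs_mul_abs_self, ← sq] at this
  convert this using 2
  rw [sub_smul]
  abel

theorem Real.log_sq_le_two_mul_add_inv {w : ℝ} (hw : 0 < w) : log w ^ 2 ≤ 2 * (w + w⁻¹) := by
  have h := pow_div_factorial_le_exp _ (abs_nonneg (log w)) 2
  rw [sq_abs, Nat.factorial_two, Nat.cast_ofNat] at h
  have : exp |log w| ≤ w + w⁻¹ := by
    rcases abs_cases (log w) with ⟨h', -⟩ | ⟨h', -⟩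
    · rw [h', exp_log hw]; exact le_add_of_nonneg_right (by positivity)
    · rw [h', exp_neg, exp_log hw]; linarith
  linarith

theorem Real.one_add_log_sq_mul_mul_abs_sub_one_mul_exp_neg_le {w : ℝ} (hw : 0 < w) :
    (1 + log w ^ 2) * (w * |w - 1| * exp (-w)) ≤ 18 := by
  have hlog : (1 + log w ^ 2) * w ≤ 2 + w + 2 * w ^ 2 := by
    have := mul_le_mul_of_nonneg_right (log_sq_le_two_mul_add_inv hw) hw.le
    rw [mul_assoc, add_mul, inv_mul_cancel₀ hw.ne'] at this
    nlinarith
  have habs : |w - 1| ≤ 1 + w := by rw [abs_le]; constructor <;> linarith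
  -- `2 + 3w + 3w² + 2w³ ≤ 6 (1 + w + w²/2) + 12 (w³/3!) ≤ 18 eʷ`
  have hpoly : (2 + w + 2 * w ^ 2) * (1 + w) ≤ 18 * exp w := by
    have h2 := quadratic_le_exp_of_nonneg hw.le
    have h3 := pow_div_factorial_le_exp _ hw.le 3
    norm_num [Nat.factorial] at h3
    nlinarith
  calc (1 + log w ^ 2) * (w * |w - 1| * exp (-w))
      = (1 + log w ^ 2) * w * |w - 1| * exp (-w) := by ring
    _ ≤ (2 + w + 2 * w ^ 2) * (1 + w) * exp (-w) := by gcongr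
    _ ≤ 18 * exp w * exp (-w) := by gcongr
    _ = 18 := by rw [mul_assoc, ← exp_add, add_neg_cancel, exp_zero, mul_one]

theorem Real.hasDerivAt_exp_neg_rpow_mul {lam : ℝ} (hlam : 0 < lam) (t s : ℝ) :
    HasDerivAt (fun s ↦ exp (-(lam ^ s) * t))
      (-(log lam * (lam ^ s * t)) * exp (-(lam ^ s) * t)) s := by
  have := ((hasStrictDerivAt_const_rpow hlam s).hasDerivAt.fun_neg.mul_const t).exp
  exact this.congr_deriv (by ring)

theorem Real.hasDerivAt_deriv_exp_neg_rpow_mul {lam : ℝ} (hlam : 0 < lam) (t s : ℝ) :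
    HasDerivAt (fun s ↦ -(log lam * (lam ^ s * t)) * exp (-(lam ^ s) * t))
      (log lam ^ 2 * (lam ^ s * t) * (lam ^ s * t - 1) * exp (-(lam ^ s) * t)) s := by
  have := (((hasStrictDerivAt_const_rpow hlam s).hasDerivAt.mul_const t).const_mul
    (log lam)).fun_neg.fun_mul (hasDerivAt_exp_neg_rpow_mul hlam t s)
  exact this.congr_deriv (by ring)

theorem Real.abs_deriv2_exp_neg_rpow_mul_le {lam t s : ℝ} (hlam : 0 < lam) (ht : 0 < t)
    (hs : 0 < s) :
    |log lam ^ 2 * (lam ^ s * t) * (lam ^ s * t - 1) * exp (-(lam ^ s) * t)|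
      ≤ 36 / s ^ 2 * (1 + log t ^ 2) := by
  set w := lam ^ s * t with hw_def
  have hw : 0 < w := by positivity
  -- `s log λ = log w - log t` trades the unbounded `log λ` for `log w`, which `e^{-w}` absorbs
  have hslog : s * log lam = log w - log t := by
    rw [hw_def, log_mul (by positivity) ht.ne', log_rpow hlam]
    ring
  have hL : (s * log lam) ^ 2 ≤ 2 * (1 + log w ^ 2) * (1 + log t ^ 2) := by
    rw [hslog]
    nlinarith [sq_nonneg (log w + log t), sq_nonneg (log w * log t)]
  have hexp : exp (-(lam ^ s) * t) = exp (-w) := by rw [hw_def, neg_mul]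
  calc |log lam ^ 2 * w * (w - 1) * exp (-(lam ^ s) * t)|
      = (s * log lam) ^ 2 / s ^ 2 * (w * |w - 1| * exp (-w)) := by
        rw [hexp, abs_mul, abs_mul, abs_mul, abs_of_pos hw, abs_of_pos (exp_pos _),
          abs_of_nonneg (sq_nonneg _)]
        field_simp
    _ ≤ 2 * (1 + log w ^ 2) * (1 + log t ^ 2) / s ^ 2 * (w * |w - 1| * exp (-w)) := by
        gcongr
    _ = 2 / s ^ 2 * (1 + log t ^ 2) * ((1 + log w ^ 2) * (w * |w - 1| * exp (-w))) := by
        ring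
    _ ≤ 2 / s ^ 2 * (1 + log t ^ 2) * 18 := by
        gcongr
        exact one_add_log_sq_mul_mul_abs_sub_one_mul_exp_neg_le hw
    _ = 36 / s ^ 2 * (1 + log t ^ 2) := by ring

/-- Uniform first-order Taylor remainder bound for `E_{λ,t}(s) = e^{-λ^s t}` in `s`:
for `0 < |h| ≤ s̄/2`,
`|e^{-λ^{s̄+h} t} - e^{-λ^{s̄} t} + h t λ^{s̄} ln(λ) e^{-λ^{s̄} t}| ≤ C h²/s̄² (1 + |ln t|²)`. -/
theorem stmt13 :
    ∃ C : ℝ, 0 < C ∧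
      ∀ lam t sbar h : ℝ, 0 < lam → 0 < t → 0 < sbar → h ≠ 0 → |h| ≤ sbar / 2 →
        |Real.exp (-(lam ^ (sbar + h)) * t) - Real.exp (-(lam ^ sbar) * t)
            + h * t * lam ^ sbar * Real.log lam * Real.exp (-(lam ^ sbar) * t)|
          ≤ C * h ^ 2 / sbar ^ 2 * (1 + |Real.log t| ^ 2) := by
  refine ⟨144, by norm_num, fun lam t sbar h hlam ht hsbar _ hh ↦ ?_⟩
  have hsbar_mem : sbar ∈ Ici (sbar / 2) := by
    rw [mem_Ici]
    linarith
  have hmem : sbar + h ∈ Ici (sbar / 2) := by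
    rw [mem_Ici]
    linarith [neg_abs_le h]
  have hbound : ∀ s ∈ Ici (sbar / 2),
      ‖log lam ^ 2 * (lam ^ s * t) * (lam ^ s * t - 1) * exp (-(lam ^ s) * t)‖
        ≤ 144 / sbar ^ 2 * (1 + log t ^ 2) := fun s hs ↦ by
    have hs : sbar / 2 ≤ s := hs
    rw [Real.norm_eq_abs]
    refine (abs_deriv2_exp_neg_rpow_mul_le hlam ht (by linarith)).trans ?_
    gcongr ?_ * _
    calc 36 / s ^ 2 ≤ 36 / (sbar / 2) ^ 2 := by gcongr
      _ = 144 / sbar ^ 2 := by ring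
  have htaylor := (convex_Ici (sbar / 2)).norm_sub_sub_smul_deriv_le
    (fun s _ ↦ (hasDerivAt_exp_neg_rpow_mul hlam t s).hasDerivWithinAt)
    (fun s _ ↦ (hasDerivAt_deriv_exp_neg_rpow_mul hlam t s).hasDerivWithinAt)
    hbound hsbar_mem hmem
  rw [Real.norm_eq_abs, smul_eq_mul, add_sub_cancel_left] at htaylor
  rw [sq_abs]
  convert htaylor using 1
  · congr 1
    ring
  · ring
end

section
/- There exists a constant $C>0$ such that for all $\lambda>0$, $t>0$, $\bar s>0$, and all real $h$ with $0<|h|\le \bar s/2$: $\left| E'_{\lambda,t}(\bar s + h) - E'_{\lambda,t}(\bar s) - h\, E''_{\lambda,t}(\bar s) \right| \le C\, \frac{h^2}{\bar s^{3}}\left(1 + |\ln t|^3\right)$, where $E_{\lambda,t}(s) := e^{-\lambda^s t}$ and $E'_{\lambda,t}$, $E''_{\lambda,t}$ denote its first and second derivatives with respect to $s$. -/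
/-!
Write `u = λ^s t`. Then `E''' = (log λ)³ u (3u - 1 - u²) e^{-u}` and `x log λ = log u - log t`,
so `x³ |E'''(x)| ≤ |log u - log t|³ (u³ + 3u² + u) e^{-u}`. Since `uⁿ e^{-u} ≤ n!` and
`u |log u|³ ≤ 27 + u⁴`, this is at most `C (1 + |log t|³)` uniformly in `λ`. Every `x` between
`s̄` and `s̄ + h` satisfies `x ≥ s̄ / 2`, so `|E'''| ≤ 8 C (1 + |log t|³) / s̄³` there, and the
second-order Taylor bound (the mean value theorem applied twice) gives the estimate.
-/

open Real Set
open scoped Interval Nat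

section SecondOrderTaylor

variable {E : Type*} [NormedAddCommGroup E] [NormedSpace ℝ E] {f f' f'' : ℝ → E} {a b K : ℝ}

theorem norm_image_sub_sub_smul_le_of_norm_second_deriv_le
    (hf : ∀ x ∈ [[a, b]], HasDerivAt f (f' x) x) (hf' : ∀ x ∈ [[a, b]], HasDerivAt f' (f'' x) x)
    (bound : ∀ x ∈ [[a, b]], ‖f'' x‖ ≤ K) :
    ‖f b - f a - (b - a) • f' a‖ ≤ K * |b - a| ^ 2 := by
  have ha : a ∈ [[a, b]] := left_mem_uIcc
  have hb : b ∈ [[a, b]] := right_mem_uIcc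
  have hf'_lip : ∀ x ∈ [[a, b]], ‖f' x - f' a‖ ≤ K * |b - a| := fun x hx => calc
    ‖f' x - f' a‖ ≤ K * ‖x - a‖ := (convex_uIcc a b).norm_image_sub_le_of_norm_hasDerivWithin_le
        (fun y hy => (hf' y hy).hasDerivWithinAt) bound ha hx
    _ ≤ K * |b - a| := by
        rw [Real.norm_eq_abs]
        exact mul_le_mul_of_nonneg_left (abs_sub_left_of_mem_uIcc hx)
          ((norm_nonneg _).trans (bound a ha))
  have hg : ∀ x ∈ [[a, b]],
      HasDerivWithinAt (fun y => f y - (y - a) • f' a) (f' x - f' a) [[a, b]] x := by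
    intro x hx
    have : HasDerivAt (fun y => f y - (y - a) • f' a) (f' x - (1 : ℝ) • f' a) x :=
      (hf x hx).sub (((hasDerivAt_id x).sub_const a).smul_const (f' a))
    simpa using this.hasDerivWithinAt
  have := (convex_uIcc a b).norm_image_sub_le_of_norm_hasDerivWithin_le hg hf'_lip ha hb
  rwa [sub_self, zero_smul, sub_zero, sub_right_comm, Real.norm_eq_abs, mul_assoc, ← sq] at this

end SecondOrderTaylor

theorem pow_mul_exp_neg_le_factorial {u : ℝ} (hu : 0 ≤ u) (n : ℕ) : u ^ n * exp (-u) ≤ n ! := by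
  have := pow_div_factorial_le_exp (x := u) hu n
  rw [div_le_iff₀ (by positivity)] at this
  rw [exp_neg, ← div_eq_mul_inv, div_le_iff₀ (exp_pos u)]
  linarith

theorem mul_abs_log_pow_three_le {u : ℝ} (hu : 0 < u) : u * |log u| ^ 3 ≤ 27 + u ^ 4 := by
  rcases le_or_gt u 1 with hu1 | hu1
  · have h := abs_log_mul_self_rpow_lt u (1 / 3) hu hu1 (by norm_num)
    have hcube : (u ^ (1 / 3 : ℝ)) ^ 3 = u := by
      rw [← rpow_natCast, ← rpow_mul hu.le]; norm_num
    rw [abs_mul, abs_of_pos (rpow_pos_of_pos hu _)] at h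
    have := pow_lt_pow_left₀ h (by positivity) (three_ne_zero)
    rw [mul_pow, hcube] at this
    nlinarith [pow_nonneg hu.le 4]
  · have hlog : |log u| ≤ u := by
      rw [abs_of_nonneg (log_nonneg hu1.le)]
      linarith [log_le_sub_one_of_pos hu]
    have := pow_le_pow_left₀ (abs_nonneg _) hlog 3
    nlinarith

theorem abs_log_sub_pow_three_mul_le {u : ℝ} (hu : 0 < u) (b : ℝ) :
    |log u - b| ^ 3 * ((u ^ 3 + 3 * u ^ 2 + u) * exp (-u)) ≤ 5064 * (1 + |b| ^ 3) := by
  have e (n : ℕ) := pow_mul_exp_neg_le_factorial hu.le n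
  have e0 : exp (-u) ≤ 1 := exp_le_one_iff.mpr (by linarith)
  have e1 : u * exp (-u) ≤ 1 := by simpa using e 1
  have e2 : u ^ 2 * exp (-u) ≤ 2 := by simpa [Nat.factorial] using e 2
  have e3 : u ^ 3 * exp (-u) ≤ 6 := by simpa [Nat.factorial] using e 3
  have e4 : u ^ 4 * exp (-u) ≤ 24 := by simpa [Nat.factorial] using e 4
  have e5 : u ^ 5 * exp (-u) ≤ 120 := by simpa [Nat.factorial] using e 5
  have e6 : u ^ 6 * exp (-u) ≤ 720 := by simpa [Nat.factorial] using e 6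
  have hψ_nonneg : 0 ≤ (u ^ 3 + 3 * u ^ 2 + u) * exp (-u) := by positivity
  have hψ : (u ^ 3 + 3 * u ^ 2 + u) * exp (-u) ≤ 13 := by nlinarith
  have hlogψ : |log u| ^ 3 * ((u ^ 3 + 3 * u ^ 2 + u) * exp (-u)) ≤ 1266 := calc
    _ = u * |log u| ^ 3 * ((u ^ 2 + 3 * u + 1) * exp (-u)) := by ring
    _ ≤ (27 + u ^ 4) * ((u ^ 2 + 3 * u + 1) * exp (-u)) :=
        mul_le_mul_of_nonneg_right (mul_abs_log_pow_three_le hu) (by positivity)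
    _ = 27 * (u ^ 2 * exp (-u) + 3 * (u * exp (-u)) + exp (-u))
          + (u ^ 6 * exp (-u) + 3 * (u ^ 5 * exp (-u)) + u ^ 4 * exp (-u)) := by ring
    _ ≤ 1266 := by linarith
  have hcube : |log u - b| ^ 3 ≤ 4 * (|log u| ^ 3 + |b| ^ 3) :=
    (pow_le_pow_left₀ (abs_nonneg _) (abs_sub _ _) 3).trans <|
      (add_pow_le (abs_nonneg _) (abs_nonneg _) 3).trans_eq (by norm_num)
  calc _ ≤ 4 * (|log u| ^ 3 + |b| ^ 3) * ((u ^ 3 + 3 * u ^ 2 + u) * exp (-u)) :=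
        mul_le_mul_of_nonneg_right hcube hψ_nonneg
    _ ≤ 4 * (1266 + |b| ^ 3 * 13) := by
        nlinarith [mul_le_mul_of_nonneg_left hψ (pow_nonneg (abs_nonneg b) 3)]
    _ ≤ 5064 * (1 + |b| ^ 3) := by nlinarith [pow_nonneg (abs_nonneg b) 3]

namespace ExpNegRpow

noncomputable def d1 (lam t s : ℝ) : ℝ := -log lam * (lam ^ s * t) * exp (-(lam ^ s * t))

noncomputable def d2 (lam t s : ℝ) : ℝ :=
  log lam ^ 2 * ((lam ^ s * t) * (lam ^ s * t - 1)) * exp (-(lam ^ s * t))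

noncomputable def d3 (lam t s : ℝ) : ℝ :=
  log lam ^ 3 * ((lam ^ s * t) * (3 * (lam ^ s * t) - 1 - (lam ^ s * t) ^ 2)) *
    exp (-(lam ^ s * t))

section Derivatives

variable {lam : ℝ} (t : ℝ)

theorem hasDerivAt_rpow_mul (hlam : 0 < lam) (s : ℝ) :
    HasDerivAt (fun σ => lam ^ σ * t) (log lam * (lam ^ s * t)) s :=
  ((hasStrictDerivAt_const_rpow hlam s).hasDerivAt.mul_const t).congr_deriv (by ring)

theorem hasDerivAt_exp_neg_rpow_mul (hlam : 0 < lam) (s : ℝ) :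
    HasDerivAt (fun σ => exp (-(lam ^ σ) * t)) (d1 lam t s) s := by
  simp only [neg_mul]
  exact (hasDerivAt_rpow_mul t hlam s).neg.exp.congr_deriv
    (by simp only [d1, Pi.neg_apply]; ring)

theorem hasDerivAt_d1 (hlam : 0 < lam) (s : ℝ) : HasDerivAt (d1 lam t) (d2 lam t s) s := by
  have hu := hasDerivAt_rpow_mul t hlam s
  exact ((hu.const_mul (-log lam)).mul hu.neg.exp).congr_deriv
    (by simp only [d2, Pi.neg_apply]; ring)

theorem hasDerivAt_d2 (hlam : 0 < lam) (s : ℝ) : HasDerivAt (d2 lam t) (d3 lam t s) s := by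
  have hu := hasDerivAt_rpow_mul t hlam s
  exact (((hu.mul (hu.sub_const 1)).const_mul (log lam ^ 2)).mul hu.neg.exp).congr_deriv
    (by simp only [d3, Pi.neg_apply, Pi.mul_apply]; ring)

theorem deriv_exp_neg_rpow_mul (hlam : 0 < lam) :
    deriv (fun σ => exp (-(lam ^ σ) * t)) = d1 lam t :=
  funext fun s => (hasDerivAt_exp_neg_rpow_mul t hlam s).deriv

theorem iteratedDeriv_two_exp_neg_rpow_mul (hlam : 0 < lam) :
    iteratedDeriv 2 (fun σ => exp (-(lam ^ σ) * t)) = d2 lam t := by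
  rw [iteratedDeriv_succ, iteratedDeriv_one, deriv_exp_neg_rpow_mul t hlam]
  exact funext fun s => (hasDerivAt_d1 t hlam s).deriv

end Derivatives

theorem abs_d3_mul_pow_three_le {lam t x : ℝ} (hlam : 0 < lam) (ht : 0 < t) (hx : 0 < x) :
    |d3 lam t x| * x ^ 3 ≤ 5064 * (1 + |log t| ^ 3) := by
  set u := lam ^ x * t with hu_def
  have hu : 0 < u := by positivity
  have hlog : x * log lam = log u - log t := by
    rw [hu_def, log_mul (rpow_pos_of_pos hlam x).ne' ht.ne', log_rpow hlam]; ring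
  have hpoly : u * |3 * u - 1 - u ^ 2| ≤ u ^ 3 + 3 * u ^ 2 + u := by
    have : |3 * u - 1 - u ^ 2| ≤ u ^ 2 + 3 * u + 1 := by
      rw [abs_le]; constructor <;> nlinarith
    nlinarith
  calc |d3 lam t x| * x ^ 3
      = |x * log lam| ^ 3 * (u * |3 * u - 1 - u ^ 2| * exp (-u)) := by
        simp only [d3, ← hu_def, abs_mul, abs_pow, abs_of_pos hu, abs_of_pos hx,
          abs_of_pos (exp_pos _)]
        ring
    _ ≤ |log u - log t| ^ 3 * ((u ^ 3 + 3 * u ^ 2 + u) * exp (-u)) := by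
        rw [hlog]; gcongr
    _ ≤ 5064 * (1 + |log t| ^ 3) := abs_log_sub_pow_three_mul_le hu (log t)

theorem abs_d3_le {lam t s x : ℝ} (hlam : 0 < lam) (ht : 0 < t) (hs : 0 < s) (hx : s / 2 ≤ x) :
    |d3 lam t x| ≤ 8 * 5064 / s ^ 3 * (1 + |log t| ^ 3) := by
  have hx0 : 0 < x := by linarith
  have hx3 : s ^ 3 / 8 ≤ x ^ 3 := by
    have := pow_le_pow_left₀ (by positivity) hx 3
    linarith [show (s / 2) ^ 3 = s ^ 3 / 8 by ring]
  have := abs_d3_mul_pow_three_le hlam ht hx0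
  rw [div_mul_eq_mul_div, le_div_iff₀ (by positivity)]
  nlinarith [abs_nonneg (d3 lam t x)]

end ExpNegRpow

/-- Uniform Taylor remainder bound for the first `s`-derivative of `E_{λ,t}(s) = e^{-λ^s t}`:
for `0 < |h| ≤ s̄/2`,
`|E'_{λ,t}(s̄+h) - E'_{λ,t}(s̄) - h E''_{λ,t}(s̄)| ≤ C h²/s̄³ (1 + |ln t|³)`. -/
theorem stmt14 :
    ∃ C : ℝ, 0 < C ∧
      ∀ lam t sbar h : ℝ, 0 < lam → 0 < t → 0 < sbar → h ≠ 0 → |h| ≤ sbar / 2 →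
        |deriv (fun σ : ℝ => Real.exp (-(lam ^ σ) * t)) (sbar + h)
            - deriv (fun σ : ℝ => Real.exp (-(lam ^ σ) * t)) sbar
            - h * iteratedDeriv 2 (fun σ : ℝ => Real.exp (-(lam ^ σ) * t)) sbar|
          ≤ C * h ^ 2 / sbar ^ 3 * (1 + |Real.log t| ^ 3) := by
  refine ⟨8 * 5064, by norm_num, fun lam t sbar h hlam ht hs _ hh => ?_⟩
  rw [ExpNegRpow.deriv_exp_neg_rpow_mul t hlam,
    ExpNegRpow.iteratedDeriv_two_exp_neg_rpow_mul t hlam]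
  have hhalf : ∀ x ∈ [[sbar, sbar + h]], sbar / 2 ≤ x := fun x hx => by
    have := abs_sub_left_of_mem_uIcc hx
    rw [add_sub_cancel_left] at this
    linarith [neg_abs_le (x - sbar)]
  have := norm_image_sub_sub_smul_le_of_norm_second_deriv_le
    (fun x _ => ExpNegRpow.hasDerivAt_d1 t hlam x)
    (fun x _ => ExpNegRpow.hasDerivAt_d2 t hlam x)
    (fun x hx => ExpNegRpow.abs_d3_le hlam ht hs (hhalf x hx))
  rw [add_sub_cancel_left, smul_eq_mul, Real.norm_eq_abs, sq_abs] at this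
  exact this.trans_eq (by ring)
end

section
/- For every $T>0$ there exists a constant $C>0$ such that for all $\lambda>0$, $s>0$ and $t\in(0,T]$: $\int_0^t \left(\lambda^s (t-\tau) \ln(\lambda)\, e^{-\lambda^s (t-\tau)}\right)^2 d\tau \le \frac{C}{s^2}$. (The integrand is the square of $\partial_s e^{-\lambda^s(t-\tau)}$.) -/
/-
For `u = μ r` with `μ = λ^s` and `r = t - τ`, the integrand is `(log μ · u e^{-u})² / s²`,
since `log λ = log μ / s`. Splitting `log μ = log u - log r` and using that `u e^{-u}` and
`|log u| u e^{-u}` are bounded on `(0, ∞)` gives `|log μ| u e^{-u} ≤ 3 + |log r|`, uniformly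
in `μ`. The square of the right-hand side is dominated by `18 + 64 (r^{1/2} + r^{-1/2})`,
which is integrable near `0`.
-/

open Real Set MeasureTheory intervalIntegral

lemma abs_log_le_add_inv {x : ℝ} (hx : 0 < x) : |log x| ≤ x + x⁻¹ := by
  rw [abs_le]
  constructor
  · linarith [one_sub_inv_le_log_of_pos hx]
  · linarith [log_le_self hx.le, inv_pos.2 hx]

lemma abs_log_le_rpow_add_rpow_neg {x ε : ℝ} (hx : 0 < x) (hε : 0 < ε) :
    |log x| ≤ (x ^ ε + x ^ (-ε)) / ε := by
  have h := abs_log_le_add_inv (rpow_pos_of_pos hx ε)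
  rw [log_rpow hx, abs_mul, abs_of_pos hε, ← rpow_neg hx.le] at h
  rw [le_div_iff₀ hε, mul_comm]
  exact h

lemma sq_log_le {r : ℝ} (hr : 0 < r) :
    log r ^ 2 ≤ 32 * (r ^ (1 / 2 : ℝ) + r ^ (-1 / 2 : ℝ)) := by
  have hquarter : ∀ e : ℝ, (r ^ (e / 4)) ^ 2 = r ^ (e / 2) := fun e => by
    rw [← rpow_natCast, ← rpow_mul hr.le]; ring_nf
  have h := abs_log_le_rpow_add_rpow_neg hr (ε := 1 / 4) (by norm_num)
  rw [← sq_abs, ← hquarter 1, ← hquarter (-1)]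
  calc |log r| ^ 2 ≤ ((r ^ (1 / 4 : ℝ) + r ^ (-(1 / 4) : ℝ)) / (1 / 4)) ^ 2 :=
        pow_le_pow_left₀ (abs_nonneg _) h 2
    _ ≤ 32 * ((r ^ (1 / 4 : ℝ)) ^ 2 + (r ^ (-1 / 4 : ℝ)) ^ 2) := by
        rw [neg_div]
        nlinarith [sq_nonneg (r ^ (1 / 4 : ℝ) - r ^ (-(1 / 4) : ℝ))]

lemma sq_mul_exp_neg_le_two {u : ℝ} (hu : 0 ≤ u) : u ^ 2 * exp (-u) ≤ 2 := by
  rw [exp_neg, ← div_eq_mul_inv, div_le_iff₀ (exp_pos u)]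
  linarith [quadratic_le_exp_of_nonneg hu]

lemma mul_exp_neg_le_one (u : ℝ) : u * exp (-u) ≤ 1 :=
  (mul_exp_neg_le_exp_neg_one u).trans (exp_le_one_iff.2 (by norm_num))

lemma abs_log_mul_mul_exp_neg_le {u : ℝ} (hu : 0 < u) : |log u| * (u * exp (-u)) ≤ 3 := by
  have hexp : exp (-u) ≤ 1 := exp_le_one_iff.2 (by linarith)
  calc |log u| * (u * exp (-u)) ≤ (u + u⁻¹) * (u * exp (-u)) := by
        gcongr; exact abs_log_le_add_inv hu
    _ = u ^ 2 * exp (-u) + exp (-u) := by field_simp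
    _ ≤ 3 := by linarith [sq_mul_exp_neg_le_two hu.le]

lemma abs_log_mul_mul_mul_exp_neg_le {μ r : ℝ} (hμ : 0 < μ) (hr : 0 < r) :
    |log μ * (μ * r * exp (-(μ * r)))| ≤ 3 + |log r| := by
  have hu : 0 < μ * r := mul_pos hμ hr
  have hdecay_nonneg : 0 ≤ μ * r * exp (-(μ * r)) := by positivity
  have hsplit : log μ = log (μ * r) - log r := by rw [log_mul hμ.ne' hr.ne']; ring
  rw [abs_mul, abs_of_nonneg hdecay_nonneg, hsplit]
  calc |log (μ * r) - log r| * (μ * r * exp (-(μ * r)))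
      ≤ (|log (μ * r)| + |log r|) * (μ * r * exp (-(μ * r))) := by gcongr; exact abs_sub _ _
    _ ≤ 3 + |log r| * 1 := by
        rw [add_mul]
        gcongr
        · exact abs_log_mul_mul_exp_neg_le hu
        · exact mul_exp_neg_le_one _
    _ = 3 + |log r| := by rw [mul_one]

noncomputable def logSqMajorant (r : ℝ) : ℝ :=
  18 + 64 * (r ^ (1 / 2 : ℝ) + r ^ (-1 / 2 : ℝ))

lemma logSqMajorant_pos {r : ℝ} (hr : 0 ≤ r) : 0 < logSqMajorant r := by
  unfold logSqMajorant; positivity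

lemma sq_log_mul_mul_mul_exp_neg_le_logSqMajorant {μ r : ℝ} (hμ : 0 < μ) (hr : 0 < r) :
    (log μ * (μ * r * exp (-(μ * r)))) ^ 2 ≤ logSqMajorant r := by
  have h := abs_log_mul_mul_mul_exp_neg_le hμ hr
  calc (log μ * (μ * r * exp (-(μ * r)))) ^ 2 ≤ (3 + |log r|) ^ 2 := by
        rw [← sq_abs]; exact pow_le_pow_left₀ (abs_nonneg _) h 2
    _ ≤ 18 + 2 * log r ^ 2 := by nlinarith [sq_nonneg (|log r| - 3), sq_abs (log r)]
    _ ≤ logSqMajorant r := by unfold logSqMajorant; linarith [sq_log_le hr]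

lemma intervalIntegrable_logSqMajorant (a b : ℝ) :
    IntervalIntegrable logSqMajorant volume a b :=
  intervalIntegrable_const.add <| IntervalIntegrable.const_mul
    ((intervalIntegrable_rpow' (by norm_num)).add (intervalIntegrable_rpow' (by norm_num))) _

/-- Itô-isometry estimate for the first `s`-derivative of the stochastic convolution mode:
`∫₀ᵗ (λ^s (t-τ) ln(λ) e^{-λ^s (t-τ)})² dτ ≤ C/s²` uniformly in `λ > 0` and `t ∈ (0,T]`. -/
theorem stmt16 (T : ℝ) (hT : 0 < T) :
    ∃ C : ℝ, 0 < C ∧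
      ∀ lam s : ℝ, 0 < lam → 0 < s → ∀ t ∈ Set.Ioc (0 : ℝ) T,
        (∫ τ in (0 : ℝ)..t,
            (lam ^ s * (t - τ) * Real.log lam * Real.exp (-(lam ^ s) * (t - τ))) ^ 2)
          ≤ C / s ^ 2 := by
  refine ⟨∫ r in (0 : ℝ)..T, logSqMajorant r,
    intervalIntegral_pos_of_pos_on (intervalIntegrable_logSqMajorant 0 T)
      (fun r hr => logSqMajorant_pos hr.1.le) hT, ?_⟩
  rintro lam s hlam hs t ⟨ht0, htT⟩
  set μ := lam ^ s with hμ_def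
  have hμ : 0 < μ := rpow_pos_of_pos hlam s
  have hlog : log lam = log μ / s := by rw [hμ_def, log_rpow hlam]; field_simp
  calc (∫ τ in (0 : ℝ)..t, (μ * (t - τ) * log lam * exp (-μ * (t - τ))) ^ 2)
      = (∫ r in (0 : ℝ)..t, (log μ * (μ * r * exp (-(μ * r)))) ^ 2) / s ^ 2 := by
        have hshift := integral_comp_sub_left
          (fun r => (log μ * (μ * r * exp (-(μ * r)))) ^ 2 / s ^ 2) (a := 0) (b := t) t
        rw [sub_self, sub_zero] at hshift
        rw [← intervalIntegral.integral_div, ← hshift]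
        congr 1 with τ
        rw [hlog, neg_mul]
        field_simp
    _ ≤ (∫ r in (0 : ℝ)..t, logSqMajorant r) / s ^ 2 := by
        gcongr
        exact integral_mono_on_of_le_Ioo ht0.le
          (Continuous.intervalIntegrable (by fun_prop) _ _) (intervalIntegrable_logSqMajorant 0 t)
          fun r hr => sq_log_mul_mul_mul_exp_neg_le_logSqMajorant hμ hr.1
    _ ≤ (∫ r in (0 : ℝ)..T, logSqMajorant r) / s ^ 2 := by
        gcongr
        exact integral_mono_interval le_rfl ht0.le htT
          ((ae_restrict_iff' measurableSet_Ioc).2 <|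
            ae_of_all _ fun r hr => (logSqMajorant_pos hr.1.le).le)
          (intervalIntegrable_logSqMajorant 0 T)
end

section
/- For every $T>0$ there exists a constant $C>0$ such that for every sequence $(\lambda_j)_{j\in\mathbb{N}}$ of positive reals, every $s>0$, and every $v\in\ell^2$: $\int_0^T \sum_j \left( t\, \lambda_j^s\, \ln(\lambda_j)\, e^{-\lambda_j^s t}\, v_j \right)^2 dt \le \frac{C}{s^2} \sum_j v_j^2$. In particular, the function $(t,j)\mapsto \partial_s\big(v_j e^{-\lambda_j^s t}\big)$ is square-summable over $\mathbb{N}\times(0,T)$. -/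
open MeasureTheory

open Real in

lemma aux1 (x : ℝ) (hx : 0 < x) : |x * Real.log x * Real.exp (-x)| ≤ 27 := by
  have habs : |x * Real.log x * Real.exp (-x)| = x * |Real.log x| * Real.exp (-x) := by
    rw [abs_mul, abs_mul, abs_of_pos hx, abs_of_pos (Real.exp_pos _)]
  rw [habs]
  rcases le_or_gt x 1 with h | h
  · have h1 : |Real.log x| ≤ x⁻¹ := by
      rw [abs_of_nonpos (Real.log_nonpos hx.le h), ← Real.log_inv]
      have := Real.log_le_sub_one_of_pos (inv_pos.mpr hx)
      linarith
    have he : Real.exp (-x) ≤ 1 := Real.exp_le_one_iff.mpr (by linarith)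
    calc x * |Real.log x| * Real.exp (-x) ≤ x * x⁻¹ * 1 := by
          apply mul_le_mul _ he (Real.exp_pos _).le (by positivity)
          exact mul_le_mul_of_nonneg_left h1 hx.le
      _ ≤ 27 := by rw [mul_inv_cancel₀ hx.ne']; norm_num
  · have hlog : |Real.log x| ≤ x := by
      rw [abs_of_nonneg (Real.log_nonneg h.le)]
      linarith [Real.log_le_sub_one_of_pos hx]
    have hE : (x / 3 + 1) ^ 3 ≤ Real.exp x := by
      have h1 : x / 3 + 1 ≤ Real.exp (x / 3) := by linarith [Real.add_one_le_exp (x / 3)]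
      calc (x / 3 + 1) ^ 3 ≤ Real.exp (x / 3) ^ 3 :=
            pow_le_pow_left₀ (by linarith) h1 3
        _ = Real.exp x := by rw [← Real.exp_nat_mul]; congr 1; push_cast; ring
    rw [Real.exp_neg]
    rw [mul_inv_le_iff₀ (Real.exp_pos _)]
    calc x * |Real.log x| ≤ x * x := mul_le_mul_of_nonneg_left hlog hx.le
      _ ≤ 27 * (x / 3 + 1) ^ 3 := by nlinarith [mul_pos (mul_pos hx hx) hx, sq_nonneg x, hx.le]
      _ ≤ 27 * Real.exp x := by nlinarith [Real.exp_pos x]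

lemma aux2 (t μ : ℝ) (ht : 0 < t) (hμ : 0 < μ) :
    |t * μ * Real.log μ * Real.exp (-μ * t)| ≤ 27 + |Real.log t| := by
  set x := μ * t with hxdef
  have hx : 0 < x := mul_pos hμ ht
  have hlogμ : Real.log μ = Real.log x - Real.log t := by
    rw [hxdef, Real.log_mul hμ.ne' ht.ne']; ring
  have hrw : t * μ * Real.log μ * Real.exp (-μ * t)
      = x * Real.log x * Real.exp (-x) - Real.log t * (x * Real.exp (-x)) := by
    rw [hlogμ]; rw [neg_mul, hxdef]; ring
  rw [hrw]
  have hxe : x * Real.exp (-x) ≤ 1 := by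
    rw [Real.exp_neg, mul_inv_le_iff₀ (Real.exp_pos _), one_mul]
    linarith [Real.add_one_le_exp x]
  have hxe0 : 0 ≤ x * Real.exp (-x) := by positivity
  calc |x * Real.log x * Real.exp (-x) - Real.log t * (x * Real.exp (-x))|
      ≤ |x * Real.log x * Real.exp (-x)| + |Real.log t * (x * Real.exp (-x))| := abs_sub _ _
    _ ≤ 27 + |Real.log t| := by
        have := aux1 x hx
        have h2 : |Real.log t * (x * Real.exp (-x))| ≤ |Real.log t| := by
          rw [abs_mul, abs_of_nonneg hxe0]
          calc |Real.log t| * (x * Real.exp (-x)) ≤ |Real.log t| * 1 :=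
                mul_le_mul_of_nonneg_left hxe (abs_nonneg _)
            _ = |Real.log t| := mul_one _
        linarith

lemma aux3 (t lamj s : ℝ) (ht : 0 < t) (hl : 0 < lamj) (hs : 0 < s) :
    |t * lamj ^ s * Real.log lamj * Real.exp (-(lamj ^ s) * t)| ≤ (27 + |Real.log t|) / s := by
  have hμ : 0 < lamj ^ s := Real.rpow_pos_of_pos hl s
  have hlog : Real.log lamj = Real.log (lamj ^ s) / s := by
    rw [Real.log_rpow hl]; field_simp
  have hrw : t * lamj ^ s * Real.log lamj * Real.exp (-(lamj ^ s) * t)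
      = t * lamj ^ s * Real.log (lamj ^ s) * Real.exp (-(lamj ^ s) * t) / s := by
    rw [hlog]; ring
  rw [hrw, abs_div, abs_of_pos hs]
  exact div_le_div_of_nonneg_right (aux2 t (lamj ^ s) ht hμ) hs.le

lemma aux4 (T t : ℝ) (hT : 0 < T) (ht : 0 < t) (htT : t ≤ T) :
    (27 + |Real.log t|) ^ 2 ≤ 2 * (27 + T) ^ 2 + 32 * t ^ (-(1/2) : ℝ) := by
  have hy : 0 < t ^ (-(1/4) : ℝ) := Real.rpow_pos_of_pos ht _
  have hlog : |Real.log t| ≤ T + 4 * t ^ (-(1/4) : ℝ) := by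
    rcases le_or_gt t 1 with h | h
    · have h1 : Real.log (t ^ (-(1/4) : ℝ)) ≤ t ^ (-(1/4) : ℝ) - 1 :=
        Real.log_le_sub_one_of_pos hy
      rw [Real.log_rpow ht] at h1
      rw [abs_of_nonpos (Real.log_nonpos ht.le h)]
      nlinarith
    · rw [abs_of_nonneg (Real.log_nonneg h.le)]
      have := Real.log_le_sub_one_of_pos ht
      nlinarith
  have hsq : t ^ (-(1/2) : ℝ) = t ^ (-(1/4) : ℝ) * t ^ (-(1/4) : ℝ) := by
    rw [← Real.rpow_add ht]; norm_num
  rw [hsq]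
  nlinarith [sq_nonneg (27 + T - 4 * t ^ (-(1/4) : ℝ)), abs_nonneg (Real.log t), hy.le, hT.le]

/-- The `s`-derivative of the deterministic part of the solution is square integrable in
space-time: `∫₀ᵀ ∑_j (t λ_j^s ln(λ_j) e^{-λ_j^s t} v_j)² dt ≤ (C/s²) ∑_j v_j²`. -/
theorem stmt18 (T : ℝ) (hT : 0 < T) :
    ∃ C : ℝ, 0 < C ∧
      ∀ lam : ℕ → ℝ, (∀ j, 0 < lam j) → ∀ s : ℝ, 0 < s →
        ∀ v : ℕ → ℝ, Summable (fun j => v j ^ 2) →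
          IntegrableOn
            (fun t : ℝ => ∑' j, (t * lam j ^ s * Real.log (lam j)
              * Real.exp (-(lam j ^ s) * t) * v j) ^ 2) (Set.Ioc 0 T) ∧
          (∫ t in (0 : ℝ)..T,
              ∑' j, (t * lam j ^ s * Real.log (lam j)
                * Real.exp (-(lam j ^ s) * t) * v j) ^ 2)
            ≤ C / s ^ 2 * ∑' j, v j ^ 2 := by
  set g : ℝ → ℝ := fun t => 2 * (27 + T) ^ 2 + 32 * t ^ (-(1/2) : ℝ) with hg
  have hg_int : IntervalIntegrable g volume 0 T := by
    apply IntervalIntegrable.add intervalIntegrable_const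
    exact (intervalIntegral.intervalIntegrable_rpow' (by norm_num)).const_mul 32
  have hg_pos : ∀ t ∈ Set.Ioc (0:ℝ) T, 0 < g t := by
    intro t ht
    have : 0 < t ^ (-(1/2) : ℝ) := Real.rpow_pos_of_pos ht.1 _
    have h27 : (0:ℝ) < 27 + T := by linarith
    simp only [hg]; positivity
  refine ⟨∫ t in (0:ℝ)..T, g t, ?_, ?_⟩
  · exact intervalIntegral.intervalIntegral_pos_of_pos_on hg_int
      (fun x hx => hg_pos x ⟨hx.1, hx.2.le⟩) hT
  intro lam hlam s hs v hv
  set f : ℕ → ℝ → ℝ := fun j t => (t * lam j ^ s * Real.log (lam j)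
      * Real.exp (-(lam j ^ s) * t) * v j) ^ 2 with hf
  set V : ℝ := ∑' j, v j ^ 2 with hV
  have hV0 : 0 ≤ V := tsum_nonneg fun j => sq_nonneg _
  have hbound : ∀ t ∈ Set.Ioc (0:ℝ) T, ∀ j,
      f j t ≤ (27 + |Real.log t|) ^ 2 / s ^ 2 * v j ^ 2 := by
    intro t ht j
    have hA := aux3 t (lam j) s ht.1 (hlam j) hs
    have h1 : (t * lam j ^ s * Real.log (lam j) * Real.exp (-(lam j ^ s) * t)) ^ 2
        ≤ ((27 + |Real.log t|) / s) ^ 2 := by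
      rw [← sq_abs]
      exact pow_le_pow_left₀ (abs_nonneg _) hA 2
    have : f j t = (t * lam j ^ s * Real.log (lam j) * Real.exp (-(lam j ^ s) * t)) ^ 2
        * v j ^ 2 := by rw [hf]; ring
    rw [this, div_pow] at *
    exact mul_le_mul_of_nonneg_right h1 (sq_nonneg _)
  have hsum : ∀ t ∈ Set.Ioc (0:ℝ) T, Summable (fun j => f j t) := fun t ht =>
    Summable.of_nonneg_of_le (fun j => sq_nonneg _) (hbound t ht)
      (hv.mul_left ((27 + |Real.log t|) ^ 2 / s ^ 2))
  have hFle : ∀ t ∈ Set.Ioc (0:ℝ) T, (∑' j, f j t) ≤ V / s ^ 2 * g t := by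
    intro t ht
    have h1 : (∑' j, f j t) ≤ (27 + |Real.log t|) ^ 2 / s ^ 2 * V := by
      rw [hV, ← tsum_mul_left]
      exact Summable.tsum_le_tsum (hbound t ht) (hsum t ht)
        (hv.mul_left ((27 + |Real.log t|) ^ 2 / s ^ 2))
    have h2 : (27 + |Real.log t|) ^ 2 ≤ g t := aux4 T t hT ht.1 ht.2
    have h3 : (27 + |Real.log t|) ^ 2 / s ^ 2 * V ≤ g t / s ^ 2 * V := by
      apply mul_le_mul_of_nonneg_right _ hV0
      exact div_le_div_of_nonneg_right h2 (by positivity)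
    calc (∑' j, f j t) ≤ (27 + |Real.log t|) ^ 2 / s ^ 2 * V := h1
      _ ≤ g t / s ^ 2 * V := h3
      _ = V / s ^ 2 * g t := by ring
  have hmeas : AEMeasurable (fun t => ∑' j, f j t) (volume.restrict (Set.Ioc 0 T)) := by
    apply aemeasurable_of_tendsto_metrizable_ae Filter.atTop
      (f := fun n t => ∑ j ∈ Finset.range n, f j t)
    · intro n
      exact (continuous_finset_sum _ fun j _ => by simp only [hf]; fun_prop).measurable.aemeasurable
    · filter_upwards [ae_restrict_mem measurableSet_Ioc] with t ht
      exact (hsum t ht).hasSum.tendsto_sum_nat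
  have hgIoc : IntegrableOn g (Set.Ioc 0 T) :=
    (intervalIntegrable_iff_integrableOn_Ioc_of_le hT.le).mp hg_int
  have hFint : IntegrableOn (fun t => ∑' j, f j t) (Set.Ioc 0 T) := by
    apply Integrable.mono' (hgIoc.const_mul (V / s ^ 2)) hmeas.aestronglyMeasurable
    filter_upwards [ae_restrict_mem measurableSet_Ioc] with t ht
    rw [Real.norm_eq_abs, abs_of_nonneg (tsum_nonneg fun j => sq_nonneg _)]
    exact hFle t ht
  refine ⟨hFint, ?_⟩
  rw [intervalIntegral.integral_of_le hT.le]
  calc (∫ t in Set.Ioc (0:ℝ) T, ∑' j, f j t)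
      ≤ ∫ t in Set.Ioc (0:ℝ) T, V / s ^ 2 * g t :=
        setIntegral_mono_on hFint (hgIoc.const_mul _) measurableSet_Ioc hFle
    _ = V / s ^ 2 * ∫ t in Set.Ioc (0:ℝ) T, g t := integral_const_mul _ _
    _ = V / s ^ 2 * ∫ t in (0:ℝ)..T, g t := by rw [intervalIntegral.integral_of_le hT.le]
    _ = (∫ t in (0:ℝ)..T, g t) / s ^ 2 * V := by ring
end
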